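/- arXiv:2305.19925 — 5 statements merged into one kernel-verified Lean document; each statement's English description precedes it below -/
import Mathlib

section
/- Let F^R be a twinfree rooted graph and let m, n ∈ ℕ^{V(F)} be vectors with all entries positive. Then the blowups F^R(m) and F^R(n) are isomorphic as rooted graphs if and only if there exists an automorphism φ of F^R such that m_i = n_{φ(i)} for all i ∈ V(F). -/
private def sigmaFiber {ι : Type*} (β : ι → Type*) (i : ι) :
    {x : Σ j, β j // x.1 = i} ≃ β i where
  toFun x := x.2 ▸ x.1.2
  invFun b := ⟨⟨i, b⟩, rfl⟩
  left_inv := fun ⟨⟨j, k⟩, h⟩ => by subst h; rfl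
  right_inv := fun b => rfl

private lemma key {V : Type*} [Fintype V] {F : SimpleGraph V} {R : Set V}
    (htf : ∀ u v : V, Xor' (u ∈ R) (v ∈ R) ∨ (F.neighborSet u = F.neighborSet v → u = v))
    {m n : V → ℕ} (hn : ∀ i, 0 < n i)
    (ψ : (Σ i : V, Fin (m i)) ≃ (Σ i : V, Fin (n i)))
    (hadj : ∀ a b : Σ i : V, Fin (m i), F.Adj a.1 b.1 ↔ F.Adj (ψ a).1 (ψ b).1)
    (hR : ∀ a : Σ i : V, Fin (m i), a.1 ∈ R ↔ (ψ a).1 ∈ R)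
    (a b : Σ i : V, Fin (m i)) (h : a.1 = b.1) : (ψ a).1 = (ψ b).1 := by
  have hN : F.neighborSet (ψ a).1 = F.neighborSet (ψ b).1 := by
    ext j
    simp only [SimpleGraph.mem_neighborSet]
    set z := ψ.symm ⟨j, ⟨0, hn j⟩⟩ with hz
    have hzz : (ψ z).1 = j := by rw [hz, Equiv.apply_symm_apply]
    rw [← hzz, ← hadj a z, ← hadj b z, h]
  rcases htf (ψ a).1 (ψ b).1 with hx | him
  · exfalso
    have h1 : (ψ a).1 ∈ R ↔ (ψ b).1 ∈ R := by rw [← hR a, ← hR b, h]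
    rcases hx with ⟨hp, hq⟩ | ⟨hp, hq⟩
    · exact hq (h1.mp hp)
    · exact hq (h1.mpr hp)
  · exact him hN

/-- Let `F^R` be a twinfree rooted graph (the root order `≤_R` being the
restriction of the linear order of `V` to `R`) and let `m n : V → ℕ` have positive entries.
Then the blowups `F^R(m)` and `F^R(n)` are isomorphic as rooted graphs iff there is an
automorphism `φ` of `F^R` with `m i = n (φ i)` for all `i`.

The `m`-blowup has vertex set `Σ i, Fin (m i)`, two vertices adjacent iff their underlying
vertices are adjacent in `F`; its roots are the blowup copies of roots, ordered
lexicographically (first by the underlying vertex via `≤_R`, then by the `Fin` index, so that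
each blowup part forms an interval and the intervals occur in root order).  An isomorphism of
rooted graphs is an adjacency-preserving bijection that is root-respecting and
root-order-preserving; an automorphism of `F^R` is an isomorphism from `F^R` to itself. -/
theorem stmt7 {V : Type*} [Fintype V] [LinearOrder V] (F : SimpleGraph V) (R : Set V)
    (htf : ∀ u v : V, Xor' (u ∈ R) (v ∈ R) ∨ (F.neighborSet u = F.neighborSet v → u = v))
    (m n : V → ℕ) (hm : ∀ i, 0 < m i) (hn : ∀ i, 0 < n i) :
    (∃ ψ : (Σ i : V, Fin (m i)) ≃ (Σ i : V, Fin (n i)),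
      (∀ a b : Σ i : V, Fin (m i), F.Adj a.1 b.1 ↔ F.Adj (ψ a).1 (ψ b).1) ∧
      (∀ a : Σ i : V, Fin (m i), a.1 ∈ R ↔ (ψ a).1 ∈ R) ∧
      (∀ a b : Σ i : V, Fin (m i), a.1 ∈ R → b.1 ∈ R →
        ((a.1 < b.1 ∨ (a.1 = b.1 ∧ (a.2 : ℕ) ≤ (b.2 : ℕ)))
          ↔ ((ψ a).1 < (ψ b).1 ∨ ((ψ a).1 = (ψ b).1 ∧ ((ψ a).2 : ℕ) ≤ ((ψ b).2 : ℕ))))))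
    ↔
    (∃ φ : V ≃ V,
      (∀ u v : V, F.Adj u v ↔ F.Adj (φ u) (φ v)) ∧
      (∀ v : V, v ∈ R ↔ φ v ∈ R) ∧
      (∀ u v : V, u ∈ R → v ∈ R → (u ≤ v ↔ φ u ≤ φ v)) ∧
      (∀ i : V, m i = n (φ i))) := by
  constructor
  · rintro ⟨ψ, hadj, hR, hord⟩
    have hadj' : ∀ a b : Σ i : V, Fin (n i),
        F.Adj a.1 b.1 ↔ F.Adj (ψ.symm a).1 (ψ.symm b).1 := fun a b => by
      have := hadj (ψ.symm a) (ψ.symm b)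
      rw [Equiv.apply_symm_apply, Equiv.apply_symm_apply] at this
      exact this.symm
    have hR' : ∀ a : Σ i : V, Fin (n i), a.1 ∈ R ↔ (ψ.symm a).1 ∈ R := fun a => by
      have := hR (ψ.symm a)
      rw [Equiv.apply_symm_apply] at this
      exact this.symm
    have k1 := key htf hn ψ hadj hR
    have k2 := key htf hm ψ.symm hadj' hR'
    have hgf : ∀ i : V, (ψ.symm ⟨(ψ ⟨i, ⟨0, hm i⟩⟩).1, ⟨0, hn _⟩⟩).1 = i := by
      intro i
      have h := k2 ⟨(ψ ⟨i, ⟨0, hm i⟩⟩).1, ⟨0, hn _⟩⟩ (ψ ⟨i, ⟨0, hm i⟩⟩) rfl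
      rwa [Equiv.symm_apply_apply] at h
    have hfg : ∀ j : V, (ψ ⟨(ψ.symm ⟨j, ⟨0, hn j⟩⟩).1, ⟨0, hm _⟩⟩).1 = j := by
      intro j
      have h := k1 ⟨(ψ.symm ⟨j, ⟨0, hn j⟩⟩).1, ⟨0, hm _⟩⟩ (ψ.symm ⟨j, ⟨0, hn j⟩⟩) rfl
      rwa [Equiv.apply_symm_apply] at h
    set φ : V ≃ V := ⟨fun i => (ψ ⟨i, ⟨0, hm i⟩⟩).1,
        fun j => (ψ.symm ⟨j, ⟨0, hn j⟩⟩).1, hgf, hfg⟩ with hφdef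
    have hφ : ∀ i : V, φ i = (ψ ⟨i, ⟨0, hm i⟩⟩).1 := fun i => rfl
    have hlt : ∀ u v : V, u ∈ R → v ∈ R → u < v → φ u < φ v := by
      intro u v hu hv huv
      have h := (hord ⟨u, ⟨0, hm u⟩⟩ ⟨v, ⟨0, hm v⟩⟩ hu hv).mp (Or.inl huv)
      rcases h with h | ⟨h, -⟩
      · exact h
      · exact absurd (φ.injective h) huv.ne
    refine ⟨φ, ?_, ?_, ?_, ?_⟩
    · intro u v
      exact hadj ⟨u, ⟨0, hm u⟩⟩ ⟨v, ⟨0, hm v⟩⟩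
    · intro v
      exact hR ⟨v, ⟨0, hm v⟩⟩
    · intro u v hu hv
      constructor
      · intro h
        rcases eq_or_lt_of_le h with rfl | h'
        · exact le_refl _
        · exact (hlt u v hu hv h').le
      · intro h
        by_contra hc
        have hvu : v < u := lt_of_not_ge hc
        exact absurd h (not_le.mpr (hlt v u hv hu hvu))
    · intro i
      have he : ∀ a : Σ j : V, Fin (m j), a.1 = i ↔ (ψ a).1 = φ i := by
        intro a
        constructor
        · intro h
          exact k1 a ⟨i, ⟨0, hm i⟩⟩ h
        · intro h
          have := k2 (ψ a) (ψ ⟨i, ⟨0, hm i⟩⟩) h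
          rwa [Equiv.symm_apply_apply, Equiv.symm_apply_apply] at this
      calc m i = Fintype.card (Fin (m i)) := (Fintype.card_fin _).symm
        _ = Fintype.card {a : Σ j : V, Fin (m j) // a.1 = i} :=
            Fintype.card_congr (sigmaFiber (fun j => Fin (m j)) i).symm
        _ = Fintype.card {b : Σ j : V, Fin (n j) // b.1 = φ i} :=
            Fintype.card_congr (ψ.subtypeEquiv he)
        _ = Fintype.card (Fin (n (φ i))) := Fintype.card_congr (sigmaFiber (fun j => Fin (n j)) (φ i))
        _ = n (φ i) := Fintype.card_fin _
  · rintro ⟨φ, hadj, hR, hord, hcard⟩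
    have hlt : ∀ u v : V, u ∈ R → v ∈ R → (u < v ↔ φ u < φ v) := by
      intro u v hu hv
      rw [lt_iff_not_ge, lt_iff_not_ge, hord v u hv hu]
    have heq : ∀ u v : V, u = v ↔ φ u = φ v :=
      fun u v => ⟨fun h => by rw [h], fun h => φ.injective h⟩
    refine ⟨Equiv.sigmaCongr φ (fun i => finCongr (hcard i)), ?_, ?_, ?_⟩
    · rintro ⟨i, k⟩ ⟨j, l⟩
      exact hadj i j
    · rintro ⟨i, k⟩
      exact hR i
    · rintro ⟨i, k⟩ ⟨j, l⟩ hi hj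
      show (i < j ∨ i = j ∧ (k : ℕ) ≤ (l : ℕ)) ↔
        (φ i < φ j ∨ φ i = φ j ∧ (k : ℕ) ≤ (l : ℕ))
      rw [← hlt i j hi hj, ← heq i j]
end

section
/- Let R be a symmetric rule of order k, let F ∈ H_k and let ab be an unordered pair of distinct elements of [k]. Then a_{Orb_{S_k}(F^{a,b}),R} = |Orb_{S_k}(F^{a,b})| · ( ∑_{ℓ=0}^{|Orb_{S_F}(ab)|} ℓ·R(F,ab,ℓ)/|Orb_{S_F}(ab)| − 1[ab ∈ E(F)] ), where S_F is the stabilizer of F in S_k, Orb_{S_F}(ab) is the orbit of the pair ab under S_F, and R(F,ab,ℓ) = ∑_{H∈H_k : |E(H) ∩ Orb_{S_F}(ab)| = ℓ} R_{F,H}. -/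
open scoped Classical

/-- `H_k`: the set of labelled graphs on `[k]`. -/
abbrev SG (k : ℕ) := SimpleGraph (Fin k)

/-- A rule of order `k`: a row-stochastic matrix indexed by labelled graphs on `[k]`. -/
def IsRule {k : ℕ} (R : SG k → SG k → ℝ) : Prop :=
  (∀ F H : SG k, 0 ≤ R F H ∧ R F H ≤ 1) ∧ (∀ F : SG k, ∑ H : SG k, R F H = 1)

/-- The action of `S_k` on labelled graphs: `σ(i)σ(j) ∈ E(σ·F) ↔ ij ∈ E(F)`. -/
def permGraph {k : ℕ} (σ : Equiv.Perm (Fin k)) (F : SG k) : SG k :=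
  SimpleGraph.comap (⇑σ.symm) F

/-- The indicator `1[ab ∈ E(H)]`. -/
noncomputable def eInd {k : ℕ} (a b : Fin k) (H : SG k) : ℝ := if H.Adj a b then 1 else 0

/-- The orbit (= isomorphism class) of the rooted graph `F^{a,b}` under the coordinatewise
action of `S_k` on `G_k = H_k × [k]^{(2)}`. -/
noncomputable def rgOrbit {k : ℕ} (F : SG k) (a b : Fin k) :
    Finset (SG k × Fin k × Fin k) :=
  Finset.univ.filter (fun p => ∃ σ : Equiv.Perm (Fin k),
    p.1 = permGraph σ F ∧ p.2.1 = σ a ∧ p.2.2 = σ b)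

/-- The quantity `a_{J,R}` for a set `J` of rooted graphs `F^{a,b}`. -/
noncomputable def aCoeff {k : ℕ} (R : SG k → SG k → ℝ)
    (J : Finset (SG k × Fin k × Fin k)) : ℝ :=
  ∑ p ∈ J, ((∑ H : SG k, R p.1 H * eInd p.2.1 p.2.2 H) - eInd p.2.1 p.2.2 p.1)
/-- The orbit of the unordered pair `ab` under the stabilizer `S_F` of `F` in `S_k`. -/
noncomputable def pairOrbit {k : ℕ} (F : SG k) (a b : Fin k) : Finset (Sym2 (Fin k)) :=
  Finset.univ.filter (fun e => ∃ σ : Equiv.Perm (Fin k),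
    permGraph σ F = F ∧ e = Sym2.map (⇑σ) s(a, b))

/-- `R(F,ab,ℓ) = ∑_{H : |E(H) ∩ Orb_{S_F}(ab)| = ℓ} R_{F,H}`. -/
noncomputable def ruleCount {k : ℕ} (R : SG k → SG k → ℝ) (F : SG k) (a b : Fin k)
    (ℓ : ℕ) : ℝ :=
  ∑ H ∈ Finset.univ.filter
      (fun H : SG k => ((pairOrbit F a b).filter (fun e => e ∈ H.edgeSet)).card = ℓ), R F H

section Aux

variable {k : ℕ}

lemma permGraph_adj (σ : Equiv.Perm (Fin k)) (H : SG k) (x y : Fin k) :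
    (permGraph σ H).Adj (σ x) (σ y) ↔ H.Adj x y := by
  simp [permGraph]

lemma permGraph_one (F : SG k) : permGraph 1 F = F := by
  ext x y; simp [permGraph, Equiv.Perm.one_def]

/-- `permGraph σ` as an equivalence on graphs. -/
def permGraphEquiv (σ : Equiv.Perm (Fin k)) : SG k ≃ SG k where
  toFun := permGraph σ
  invFun := permGraph σ.symm
  left_inv H := by ext x y; simp [permGraph]
  right_inv H := by ext x y; simp [permGraph]

lemma eInd_perm (σ : Equiv.Perm (Fin k)) (H : SG k) (a b : Fin k) :
    eInd (σ a) (σ b) (permGraph σ H) = eInd a b H := by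
  simp [eInd, permGraph_adj]

lemma sum_term_invariant (R : SG k → SG k → ℝ)
    (hsym : ∀ (σ : Equiv.Perm (Fin k)) (F H : SG k),
      R (permGraph σ F) (permGraph σ H) = R F H)
    (σ : Equiv.Perm (Fin k)) (F : SG k) (a b : Fin k) :
    ∑ H : SG k, R (permGraph σ F) H * eInd (σ a) (σ b) H
      = ∑ H : SG k, R F H * eInd a b H := by
  calc ∑ H : SG k, R (permGraph σ F) H * eInd (σ a) (σ b) H
      = ∑ H : SG k, R (permGraph σ F) (permGraphEquiv σ H)
          * eInd (σ a) (σ b) (permGraphEquiv σ H) :=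
        (Equiv.sum_comp (permGraphEquiv σ)
          (fun H => R (permGraph σ F) H * eInd (σ a) (σ b) H)).symm
    _ = ∑ H : SG k, R F H * eInd a b H := by
        refine Finset.sum_congr rfl fun H _ => ?_
        show R (permGraph σ F) (permGraph σ H) * eInd (σ a) (σ b) (permGraph σ H) = _
        rw [hsym, eInd_perm]

lemma sum_edge_invariant (R : SG k → SG k → ℝ)
    (hsym : ∀ (σ : Equiv.Perm (Fin k)) (F H : SG k),
      R (permGraph σ F) (permGraph σ H) = R F H)
    (F : SG k) (a b : Fin k) (e : Sym2 (Fin k)) (he : e ∈ pairOrbit F a b) :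
    ∑ H : SG k, R F H * (if e ∈ H.edgeSet then (1:ℝ) else 0)
      = ∑ H : SG k, R F H * eInd a b H := by
  obtain ⟨σ, hσF, rfl⟩ := (Finset.mem_filter.mp he).2
  calc ∑ H : SG k, R F H * (if Sym2.map (⇑σ) s(a, b) ∈ H.edgeSet then (1:ℝ) else 0)
      = ∑ H : SG k, R F (permGraphEquiv σ H)
          * (if Sym2.map (⇑σ) s(a, b) ∈ (permGraphEquiv σ H).edgeSet then (1:ℝ) else 0) :=
        (Equiv.sum_comp (permGraphEquiv σ)
          (fun H => R F H * (if Sym2.map (⇑σ) s(a, b) ∈ H.edgeSet then (1:ℝ) else 0))).symm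
    _ = ∑ H : SG k, R F H * eInd a b H := by
        refine Finset.sum_congr rfl fun H _ => ?_
        show R F (permGraph σ H) * _ = _
        have hr : R F (permGraph σ H) = R F H := by
          have h := hsym σ F H; rwa [hσF] at h
        rw [hr]
        congr 1
        simp [eInd, Sym2.map_pair_eq, SimpleGraph.mem_edgeSet, permGraph_adj, permGraphEquiv]

end Aux

/-- Let `R` be a symmetric rule of order `k`, `F ∈ H_k` and `a ≠ b` in
`[k]`.  Then
`a_{Orb(F^{a,b}),R} =
  |Orb(F^{a,b})| · (∑_{ℓ=0}^{|Orb_{S_F}(ab)|} ℓ·R(F,ab,ℓ)/|Orb_{S_F}(ab)| − 1[ab ∈ E(F)])`. -/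
theorem stmt11 {k : ℕ} (R : SG k → SG k → ℝ) (hR : IsRule R)
    (hsym : ∀ (σ : Equiv.Perm (Fin k)) (F H : SG k),
      R (permGraph σ F) (permGraph σ H) = R F H)
    (F : SG k) (a b : Fin k) (hab : a ≠ b) :
    aCoeff R (rgOrbit F a b)
      = ((rgOrbit F a b).card : ℝ) *
          ((∑ ℓ ∈ Finset.range ((pairOrbit F a b).card + 1),
              (ℓ : ℝ) * ruleCount R F a b ℓ / ((pairOrbit F a b).card : ℝ))
            - eInd a b F) := by
  classical
  set m := (pairOrbit F a b).card with hm
  have hmem : s(a, b) ∈ pairOrbit F a b := by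
    simp only [pairOrbit, Finset.mem_filter, Finset.mem_univ, true_and]
    exact ⟨1, permGraph_one F, by simp⟩
  have hmpos : 0 < m := Finset.card_pos.mpr ⟨_, hmem⟩
  have hmne : (m : ℝ) ≠ 0 := Nat.cast_ne_zero.mpr hmpos.ne'
  -- Step B : the averaged sum equals `∑_H R F H * eInd a b H`
  have hB : ∑ ℓ ∈ Finset.range (m + 1), (ℓ : ℝ) * ruleCount R F a b ℓ
      = (m : ℝ) * ∑ H : SG k, R F H * eInd a b H := by
    have h1 : (m : ℝ) * ∑ H : SG k, R F H * eInd a b H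
        = ∑ e ∈ pairOrbit F a b,
            ∑ H : SG k, R F H * (if e ∈ H.edgeSet then (1:ℝ) else 0) := by
      rw [Finset.sum_congr rfl (fun e he => sum_edge_invariant R hsym F a b e he),
        Finset.sum_const, nsmul_eq_mul, hm]
    have h2 : ∑ e ∈ pairOrbit F a b,
          ∑ H : SG k, R F H * (if e ∈ H.edgeSet then (1:ℝ) else 0)
        = ∑ H : SG k, R F H *
            (((pairOrbit F a b).filter (fun e => e ∈ H.edgeSet)).card : ℝ) := by
      rw [Finset.sum_comm]
      refine Finset.sum_congr rfl fun H _ => ?_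
      rw [← Finset.mul_sum]
      congr 1
      rw [Finset.sum_boole]
    have h3 : ∑ ℓ ∈ Finset.range (m + 1), (ℓ : ℝ) * ruleCount R F a b ℓ
        = ∑ H : SG k, R F H *
            (((pairOrbit F a b).filter (fun e => e ∈ H.edgeSet)).card : ℝ) := by
      rw [← Finset.sum_fiberwise_of_maps_to
        (g := fun H : SG k => ((pairOrbit F a b).filter (fun e => e ∈ H.edgeSet)).card)
        (fun H _ => Finset.mem_range.mpr
          (Nat.lt_succ_of_le (Finset.card_filter_le _ _)))
        (fun H : SG k => R F H *
          (((pairOrbit F a b).filter (fun e => e ∈ H.edgeSet)).card : ℝ))]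
      refine Finset.sum_congr rfl fun ℓ _ => ?_
      rw [ruleCount, Finset.mul_sum]
      refine Finset.sum_congr rfl fun H hH => ?_
      have := (Finset.mem_filter.mp hH).2
      rw [this, mul_comm]
    rw [h1, h2, h3]
  -- Step A plus conclusion
  have hterm : ∀ p ∈ rgOrbit F a b,
      ((∑ H : SG k, R p.1 H * eInd p.2.1 p.2.2 H) - eInd p.2.1 p.2.2 p.1)
        = ((∑ H : SG k, R F H * eInd a b H) - eInd a b F) := by
    rintro ⟨G, x, y⟩ hp
    obtain ⟨σ, hG, hx, hy⟩ := (Finset.mem_filter.mp hp).2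
    simp only at hG hx hy
    subst hG hx hy
    rw [sum_term_invariant R hsym σ F a b, eInd_perm]
  have hsumdiv : (∑ ℓ ∈ Finset.range (m + 1),
      (ℓ : ℝ) * ruleCount R F a b ℓ / (m : ℝ))
      = ∑ H : SG k, R F H * eInd a b H := by
    rw [← Finset.sum_div, hB, mul_comm, mul_div_assoc, div_self hmne, mul_one]
  rw [aCoeff, Finset.sum_congr rfl hterm, Finset.sum_const, nsmul_eq_mul, hsumdiv]
end

section
/- Let F^R be a twinfree rooted graph whose root set R has exactly two elements, let G be a twinfree graph (twinfree with empty root set), let z = (z_i)_{i∈V(G)} ∈ [0,1]^{V(G)} satisfy ∑_{i∈V(G)} z_i = 1, and let W_G^z be a z-scaled graphon representation of G with partition (Ω_i)_{i∈V(G)}. Let m = (m_i)_{i∈V(F)} ∈ ℕ^{V(F)} have positive entries with ∑_{i∈R} m_i = 2. Let (x,y) ∈ Ω² and let H^T be the (x,y)-rooted version of G for the partition (Ω_i). If |R| > |T|, then T_{F^R(m)}W_G^z(x,y) = 0. -/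
open scoped Classical
open MeasureTheory

noncomputable section

variable {Ω : Type*} [MeasurableSpace Ω]

/-- The point assignment sending the roots `p, q` to `x, y` and every other index `i`
to the integration variable `v i`. -/
def asg {A : Type*} [DecidableEq A] (p q : A) (x y : Ω) (v : A → Ω) (i : A) : Ω :=
  if i = p then x else if i = q then y else v i

/-- The rooted induced density `T_{G^{(p,q)}} W (x,y)`: the integral, over assignments of
points of `Ω` to the non-root indices, of the product over unordered pairs `{i,j}` of
distinct indices (enumerated by the strict order `lt`) of `W` on edges and `1 - W` on
non-edges.  (Integrating over all coordinates of `A` with respect to the product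
probability measure is equivalent to integrating over the non-root coordinates only,
since the integrand does not depend on the coordinates at `p` and `q`.) -/
def rdensity {A : Type*} [Fintype A] [DecidableEq A] (lt : A → A → Prop)
    (μ : Measure Ω) (Gr : SimpleGraph A) (p q : A) (W : Ω → Ω → ℝ) (x y : Ω) : ℝ :=
  ∫ v : A → Ω,
    ∏ e ∈ Finset.univ.filter (fun e : A × A => lt e.1 e.2),
      (if Gr.Adj e.1 e.2 then W (asg p q x y v e.1) (asg p q x y v e.2)
       else 1 - W (asg p q x y v e.1) (asg p q x y v e.2))
    ∂(Measure.pi fun _ : A => μ)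

/-- The `z`-scaled graphon representation `W_G^z` of `G` for the partition `(Ω_i)`:
equal to `1[ij ∈ E(G)]` on `Ω_i × Ω_j`. -/
def WGz {VG : Type*} (G : SimpleGraph VG) (Om : VG → Set Ω) : Ω → Ω → ℝ :=
  fun u w => if ∃ i j : VG, G.Adj i j ∧ u ∈ Om i ∧ w ∈ Om j then 1 else 0

/-- The set `X = {v ∈ V(G) : {x,y} ∩ Ω_v ≠ ∅}` of parts hit by `x` or `y`. -/
def hitSet {VG : Type*} (Om : VG → Set Ω) (x y : Ω) : Set VG := {v | x ∈ Om v ∨ y ∈ Om v}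

/-- The `(x,y)`-rooted version `H^T` of `G`: every vertex of `X = hitSet Om x y` is blown up
by a factor `2`; the vertex set is `VG ⊕ X` (original copies plus one duplicate for each
element of `X`), the duplicates `Sum.inr` forming the set `T` of roots.  Adjacency is
inherited through the projection to `VG`. -/
def rootedVersion {VG : Type*} (G : SimpleGraph VG) (Om : VG → Set Ω) (x y : Ω) :
    SimpleGraph (VG ⊕ ↥(hitSet Om x y)) :=
  SimpleGraph.comap (Sum.elim id Subtype.val) G

/-- The root order on the roots `T` of the `(x,y)`-rooted version: the duplicate of the part
containing `x` comes first.  (The value on non-roots is irrelevant.) -/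
def TLe {VG : Type*} (Om : VG → Set Ω) (x y : Ω) :
    (VG ⊕ ↥(hitSet Om x y)) → (VG ⊕ ↥(hitSet Om x y)) → Prop
  | Sum.inr w, Sum.inr w' => x ∈ Om w.val ∨ w = w'
  | _, _ => True

end

/-! Since `T` has fewer than two elements, `x` and `y` lie in the same part `Ω_i`, so
`W_G^z (x, ·) = W_G^z (y, ·)` and `W_G^z (x, y) = 0`. As `F^R` is twinfree, some vertex `w` is
adjacent to exactly one of the two roots. If `w` is a root, the roots are adjacent and the factor
`W(x, y)` of the integrand vanishes. Otherwise, as `W_G^z` is `0`/`1`-valued and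
`W(x, x_w) = W(y, x_w)`, either the edge factor or the non-edge factor at `w` vanishes. -/

open Function

noncomputable section

variable {Ω : Type*}

lemma eq_of_mem_of_pairwise_disjoint {ι : Type*} {f : ι → Set Ω} (h : Pairwise (Disjoint on f))
    {u : Ω} {i j : ι} (hi : u ∈ f i) (hj : u ∈ f j) : i = j :=
  h.eq (Set.not_disjoint_iff.mpr ⟨u, hi, hj⟩)

section hitSet

variable {VG : Type*} {Om : VG → Set Ω}

lemma hitSet_eq_pair (hOmd : Pairwise (Disjoint on Om)) {x y : Ω} {i j : VG}
    (hx : x ∈ Om i) (hy : y ∈ Om j) : hitSet Om x y = {i, j} := by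
  ext k
  refine ⟨fun hk => hk.imp (eq_of_mem_of_pairwise_disjoint hOmd · hx)
    (eq_of_mem_of_pairwise_disjoint hOmd · hy), ?_⟩
  rintro (rfl | rfl)
  exacts [Or.inl hx, Or.inr hy]

lemma eq_of_ncard_range_inr_lt_two (hOmd : Pairwise (Disjoint on Om)) {x y : Ω} {i j : VG}
    (hx : x ∈ Om i) (hy : y ∈ Om j)
    (hT : (Set.range (Sum.inr : ↥(hitSet Om x y) → VG ⊕ ↥(hitSet Om x y))).ncard < 2) :
    i = j := by
  by_contra hij
  rw [Set.ncard_range_of_injective Sum.inr_injective, Nat.card_coe_set_eq,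
    hitSet_eq_pair hOmd hx hy, Set.ncard_pair hij] at hT
  exact lt_irrefl 2 hT

end hitSet

section WGz

variable {VG : Type*} (G : SimpleGraph VG) (Om : VG → Set Ω)

lemma WGz_comm (u w : Ω) : WGz G Om u w = WGz G Om w u := by
  have hiff : (∃ i j, G.Adj i j ∧ u ∈ Om i ∧ w ∈ Om j) ↔
      (∃ i j, G.Adj i j ∧ w ∈ Om i ∧ u ∈ Om j) :=
    ⟨fun ⟨i, j, hij, hu, hw⟩ => ⟨j, i, hij.symm, hw, hu⟩,
      fun ⟨i, j, hij, hw, hu⟩ => ⟨j, i, hij.symm, hu, hw⟩⟩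
  simp only [WGz, hiff]

lemma WGz_eq_zero_or_one (u w : Ω) : WGz G Om u w = 0 ∨ WGz G Om u w = 1 := by
  unfold WGz
  split_ifs <;> simp

variable {G Om}

lemma WGz_apply_of_mem (hOmd : Pairwise (Disjoint on Om)) {u : Ω} {i : VG} (hu : u ∈ Om i)
    (w : Ω) : WGz G Om u w = if ∃ j, G.Adj i j ∧ w ∈ Om j then 1 else 0 := by
  have hiff : (∃ i' j, G.Adj i' j ∧ u ∈ Om i' ∧ w ∈ Om j) ↔
      ∃ j, G.Adj i j ∧ w ∈ Om j :=
    ⟨fun ⟨i', j, hij, hu', hw⟩ =>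
      ⟨j, eq_of_mem_of_pairwise_disjoint hOmd hu' hu ▸ hij, hw⟩,
      fun ⟨j, hij, hw⟩ => ⟨i, j, hij, hu, hw⟩⟩
  simp only [WGz, hiff]

lemma WGz_eq_of_mem (hOmd : Pairwise (Disjoint on Om)) {u u' : Ω} {i : VG}
    (hu : u ∈ Om i) (hu' : u' ∈ Om i) : WGz G Om u = WGz G Om u' := by
  ext w
  rw [WGz_apply_of_mem hOmd hu, WGz_apply_of_mem hOmd hu']

lemma WGz_eq_zero_of_mem (hOmd : Pairwise (Disjoint on Om)) {u w : Ω} {i : VG}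
    (hu : u ∈ Om i) (hw : w ∈ Om i) : WGz G Om u w = 0 := by
  rw [WGz_apply_of_mem hOmd hu, if_neg]
  rintro ⟨j, hij, hwj⟩
  exact hij.ne (eq_of_mem_of_pairwise_disjoint hOmd hw hwj)

end WGz

def pairFactor {A : Type*} (Gr : SimpleGraph A) (W : Ω → Ω → ℝ) (s : A → Ω) (a b : A) :
    ℝ :=
  if Gr.Adj a b then W (s a) (s b) else 1 - W (s a) (s b)

section pairFactor

variable {A : Type*} {Gr : SimpleGraph A} {W : Ω → Ω → ℝ} {s : A → Ω}

lemma pairFactor_comm (hW : ∀ u w, W u w = W w u) (a b : A) :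
    pairFactor Gr W s a b = pairFactor Gr W s b a := by
  simp only [pairFactor, Gr.adj_comm a b, hW (s a)]

lemma pairFactor_eq_zero_or_eq_zero (hW : ∀ u w, W u w = 0 ∨ W u w = 1) {a b c : A}
    (hs : W (s a) = W (s b)) (hac : Gr.Adj a c) (hbc : ¬Gr.Adj b c) :
    pairFactor Gr W s a c = 0 ∨ pairFactor Gr W s b c = 0 := by
  rcases hW (s a) (s c) with h | h
  · left
    simp only [pairFactor, if_pos hac, h]
  · right
    simp only [pairFactor, if_neg hbc, ← hs, h, sub_self]

lemma exists_pairFactor_eq_zero (hW : ∀ u w, W u w = 0 ∨ W u w = 1) {p q c : A}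
    (hs : W (s p) = W (s q)) (hpq : W (s p) (s q) = 0) (hc : Xor (Gr.Adj p c) (Gr.Adj q c)) :
    ∃ a b, a ≠ b ∧ pairFactor Gr W s a b = 0 := by
  by_cases hadj : Gr.Adj p q
  · exact ⟨p, q, hadj.ne, by simp only [pairFactor, if_pos hadj, hpq]⟩
  rcases hc with ⟨hpc, hqc⟩ | ⟨hqc, hpc⟩
  · have hcq : c ≠ q := by rintro rfl; exact hadj hpc
    rcases pairFactor_eq_zero_or_eq_zero hW hs hpc hqc with h | h
    · exact ⟨p, c, hpc.ne, h⟩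
    · exact ⟨q, c, hcq.symm, h⟩
  · have hcp : c ≠ p := by rintro rfl; exact hadj hqc.symm
    rcases pairFactor_eq_zero_or_eq_zero hW hs.symm hqc hpc with h | h
    · exact ⟨q, c, hqc.ne, h⟩
    · exact ⟨p, c, hcp.symm, h⟩

end pairFactor

lemma exists_xor_adj_of_neighborSet_ne {V : Type*} {F : SimpleGraph V} {u v : V}
    (h : F.neighborSet u ≠ F.neighborSet v) : ∃ w, Xor (F.Adj u w) (F.Adj v w) := by
  by_contra! hxor
  exact h (Set.ext fun w => not_not.mp ((xor_iff_not_iff _ _).not.mp (hxor w)))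

lemma sigma_lex_lt_or_gt {ι : Type*} [LinearOrder ι] {m : ι → ℕ} {a b : Σ i, Fin (m i)}
    (hab : a ≠ b) :
    (a.1 < b.1 ∨ (a.1 = b.1 ∧ (a.2 : ℕ) < b.2)) ∨
      (b.1 < a.1 ∨ (b.1 = a.1 ∧ (b.2 : ℕ) < a.2)) := by
  obtain ⟨i, k⟩ := a
  obtain ⟨j, l⟩ := b
  rcases lt_trichotomy i j with h | rfl | h
  · exact Or.inl (Or.inl h)
  · have hkl : (k : ℕ) ≠ l := fun h => hab (by rw [Fin.ext h])
    simp only [lt_irrefl, false_or, true_and]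
    omega
  · exact Or.inr (Or.inl h)

lemma asg_left {A : Type*} [DecidableEq A] (p q : A) (x y : Ω) (v : A → Ω) :
    asg p q x y v p = x := if_pos rfl

lemma asg_right {A : Type*} [DecidableEq A] {p q : A} (hpq : p ≠ q) (x y : Ω) (v : A → Ω) :
    asg p q x y v q = y := by
  simp only [asg, if_neg hpq.symm, if_true]

variable [MeasurableSpace Ω]

lemma rdensity_eq_zero_of_exists_pairFactor_eq_zero {A : Type*} [Fintype A] [DecidableEq A]
    {lt : A → A → Prop} (hlt : ∀ a b, a ≠ b → lt a b ∨ lt b a) (μ : Measure Ω)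
    (Gr : SimpleGraph A) (p q : A) {W : Ω → Ω → ℝ} (hW : ∀ u w, W u w = W w u) (x y : Ω)
    (h : ∀ v, ∃ a b, a ≠ b ∧ pairFactor Gr W (asg p q x y v) a b = 0) :
    rdensity lt μ Gr p q W x y = 0 := by
  refine integral_eq_zero_of_ae (Filter.Eventually.of_forall fun v => ?_)
  obtain ⟨a, b, hab, h0⟩ := h v
  rcases hlt a b hab with hlt | hlt
  · exact Finset.prod_eq_zero (i := (a, b)) (by simpa using hlt) h0
  · exact Finset.prod_eq_zero (i := (b, a)) (by simpa using hlt)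
      (by rwa [pairFactor_comm hW] at h0)

/-- The blowup `F^R(m)` has vertex set `Σ i, Fin (m i)` with adjacency inherited from `F`;
its ordered pair of roots is `(⟨r₁,0⟩, ⟨r₂,0⟩)`, and unordered pairs of its vertices are
enumerated by the lexicographic strict order. -/
theorem stmt15_general {VF VG : Type*} [Fintype VF] [LinearOrder VF]
    (μ : Measure Ω)
    (F : SimpleGraph VF) (r₁ r₂ : VF) (hr : r₁ ≠ r₂)
    (htfF : ∀ u v : VF, Xor' (u ∈ ({r₁, r₂} : Set VF)) (v ∈ ({r₁, r₂} : Set VF)) ∨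
      (F.neighborSet u = F.neighborSet v → u = v))
    (G : SimpleGraph VG)
    (Om : VG → Set Ω)
    (hOmd : ∀ i j : VG, i ≠ j → Disjoint (Om i) (Om j))
    (hOmu : (⋃ i : VG, Om i) = Set.univ)
    (m : VF → ℕ) (hm : ∀ i, 0 < m i)
    (x y : Ω)
    (hT : (Set.range (Sum.inr : ↥(hitSet Om x y) → VG ⊕ ↥(hitSet Om x y))).ncard < 2) :
    rdensity
      (fun a b : Σ i : VF, Fin (m i) => a.1 < b.1 ∨ (a.1 = b.1 ∧ (a.2 : ℕ) < (b.2 : ℕ)))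
      μ (SimpleGraph.comap (Sigma.fst) F)
      ⟨r₁, ⟨0, hm r₁⟩⟩ ⟨r₂, ⟨0, hm r₂⟩⟩ (WGz G Om) x y = 0 := by
  obtain ⟨i, hx⟩ : ∃ i, x ∈ Om i := Set.mem_iUnion.mp (hOmu ▸ Set.mem_univ x)
  obtain ⟨j, hy⟩ : ∃ j, y ∈ Om j := Set.mem_iUnion.mp (hOmu ▸ Set.mem_univ y)
  obtain rfl := eq_of_ncard_range_inr_lt_two hOmd hx hy hT
  have hroots : F.neighborSet r₁ ≠ F.neighborSet r₂ := fun h => by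
    rcases htfF r₁ r₂ with hxor | htwin
    · exact (xor_iff_not_iff _ _).mp hxor (iff_of_true (by simp) (by simp))
    · exact hr (htwin h)
  obtain ⟨w, hw⟩ := exists_xor_adj_of_neighborSet_ne hroots
  set p : Σ i : VF, Fin (m i) := ⟨r₁, ⟨0, hm r₁⟩⟩
  set q : Σ i : VF, Fin (m i) := ⟨r₂, ⟨0, hm r₂⟩⟩
  have hpq : p ≠ q := fun h => hr (congrArg Sigma.fst h)
  refine rdensity_eq_zero_of_exists_pairFactor_eq_zero (fun _ _ => sigma_lex_lt_or_gt) μ _ p q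
    (WGz_comm G Om) x y fun v => ?_
  refine exists_pairFactor_eq_zero (WGz_eq_zero_or_one G Om) (p := p) (q := q)
    (c := ⟨w, ⟨0, hm w⟩⟩) ?_ ?_ hw
  · rw [asg_left, asg_right hpq]
    exact WGz_eq_of_mem hOmd hx hy
  · rw [asg_left, asg_right hpq]
    exact WGz_eq_zero_of_mem hOmd hx hy

/-- Let `F^R` be a twinfree rooted graph whose root set `R = {r₁, r₂}` has
exactly two elements (ordered `r₁` then `r₂` by the linear order of `VF`), let `G` be a
twinfree graph, `z` a probability vector on `V(G)` and `W_G^z` a `z`-scaled graphon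
representation of `G` with partition `(Ω_i)`.  Let `m` have positive entries with
`m r₁ + m r₂ = 2`, let `(x,y) ∈ Ω²` and let `H^T` be the `(x,y)`-rooted version of `G`.
If `|R| > |T|`, then `T_{F^R(m)} W_G^z (x,y) = 0`.

The blowup `F^R(m)` has vertex set `Σ i, Fin (m i)` with adjacency inherited from `F`; since
`m r₁ = m r₂ = 1`, its ordered pair of roots is `(⟨r₁,0⟩, ⟨r₂,0⟩)`; unordered pairs of its
vertices are enumerated by the lexicographic strict order. -/
theorem stmt15 {VF VG : Type*} [Fintype VF] [LinearOrder VF] [Fintype VG] [DecidableEq VG]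
    (μ : Measure Ω) [IsProbabilityMeasure μ] [NullSingletonClass μ]
    (F : SimpleGraph VF) (r₁ r₂ : VF) (hr : r₁ ≠ r₂)
    (htfF : ∀ u v : VF, Xor' (u ∈ ({r₁, r₂} : Set VF)) (v ∈ ({r₁, r₂} : Set VF)) ∨
      (F.neighborSet u = F.neighborSet v → u = v))
    (G : SimpleGraph VG)
    (htfG : ∀ u v : VG, G.neighborSet u = G.neighborSet v → u = v)
    (z : VG → ℝ) (hz0 : ∀ i, 0 ≤ z i) (hz1 : ∀ i, z i ≤ 1) (hzs : ∑ i : VG, z i = 1)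
    (Om : VG → Set Ω) (hOmm : ∀ i, MeasurableSet (Om i))
    (hOmd : ∀ i j : VG, i ≠ j → Disjoint (Om i) (Om j))
    (hOmu : (⋃ i : VG, Om i) = Set.univ)
    (hOmz : ∀ i, μ (Om i) = ENNReal.ofReal (z i))
    (m : VF → ℕ) (hm : ∀ i, 0 < m i) (hm2 : m r₁ + m r₂ = 2)
    (x y : Ω)
    (hT : (Set.range (Sum.inr : ↥(hitSet Om x y) → VG ⊕ ↥(hitSet Om x y))).ncard < 2) :
    rdensity
      (fun a b : Σ i : VF, Fin (m i) => a.1 < b.1 ∨ (a.1 = b.1 ∧ (a.2 : ℕ) < (b.2 : ℕ)))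
      μ (SimpleGraph.comap (Sigma.fst) F)
      ⟨r₁, ⟨0, hm r₁⟩⟩ ⟨r₂, ⟨0, hm r₂⟩⟩ (WGz G Om) x y = 0 :=
  stmt15_general μ F r₁ r₂ hr htfF G Om hOmd hOmu m hm x y hT
end
end

section
/- Let F^R be a twinfree rooted graph whose root set R has exactly two elements, let G be a twinfree graph (twinfree with empty root set), let z = (z_i)_{i∈V(G)} ∈ [0,1]^{V(G)} satisfy ∑_{i∈V(G)} z_i = 1, and let W_G^z be a z-scaled graphon representation of G with partition (Ω_i)_{i∈V(G)}. Let m = (m_i)_{i∈V(F)} ∈ ℕ^{V(F)} have positive entries with ∑_{i∈R} m_i = 2. Let (x,y) ∈ Ω² and let H^T be the (x,y)-rooted version of G for the partition (Ω_i). If v*(F^R) ≥ v*(H^T) and |R| ≥ |T|, then T_{F^R(m)}W_G^z(x,y) = ∑_φ ∏_{i∈V(F)∖R} z_{φ(i)}^{m_i}, where the sum is over all root-order-preserving root-respecting relation-preserving functions φ : V(F) → V(H) from F^R to H^T. -/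
open scoped Classical
open MeasureTheory

noncomputable section

variable {Ω : Type*} [MeasurableSpace Ω]

/-!
Because `W_G^z` is a step function, the rooted density is a sum over the maps `ψ` from the blowup
`F^R(m)` to `G` that preserve both adjacency and non-adjacency and send the two roots into the
parts containing `x` and `y`; each such `ψ` is weighted by the `z`-masses of the images of the
non-root vertices.

Twinfreeness of `F^R` gives `F` exactly `v*(F^R) + 2` distinct neighbourhoods, and `ψ` must
separate them, so `|range ψ| ≥ v*(F^R) + 2`. On the other side, a part of `G` not hit by `x` or
`y` has no twin among the roots of `H^T`, so `|V(G)| ≤ |X| + v*(H^T) ≤ |X| + v*(F^R)` with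
`|X| ≤ 2`. Hence `ψ` is onto and `x`, `y` lie in different parts, and then twinfreeness of `G`
makes `ψ` constant on every blown-up class. The `ψ` are thus maps `V(F) → V(G)`, and sending the
two roots to their duplicate copies turns these into the root-respecting, root-order-preserving
maps into `H^T`.
-/

namespace SimpleGraph

variable {V W B : Type*}

def IsTwinfreeRooted (F : SimpleGraph V) (R : Set V) : Prop :=
  ∀ u v, Xor (u ∈ R) (v ∈ R) ∨ (F.neighborSet u = F.neighborSet v → u = v)

/-- The set `V*(F^R)`. -/
def vStar (F : SimpleGraph V) (R : Set V) : Set V :=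
  {v | v ∉ R ∧ ¬ ∃ s ∈ R, F.neighborSet v = F.neighborSet s}

theorem range_neighborSet_eq_image_vStar_union (F : SimpleGraph V) (R : Set V) :
    Set.range F.neighborSet = F.neighborSet '' (F.vStar R ∪ R) := by
  refine subset_antisymm ?_ (Set.image_subset_range _ _)
  rintro _ ⟨v, rfl⟩
  by_cases hv : v ∈ F.vStar R ∪ R
  · exact ⟨v, hv, rfl⟩
  · obtain ⟨hv₁, hvR⟩ := not_or.mp hv
    obtain ⟨s, hs, hvs⟩ := not_not.mp (mt (And.intro hvR) hv₁)
    exact ⟨s, Or.inr hs, hvs.symm⟩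

theorem IsTwinfreeRooted.injOn_neighborSet {F : SimpleGraph V} {R : Set V}
    (hF : F.IsTwinfreeRooted R) : Set.InjOn F.neighborSet (F.vStar R ∪ R) := by
  intro u hu v hv huv
  rcases hF u v with (⟨huR, hvR⟩ | ⟨hvR, huR⟩) | htwin
  · exact (hv.resolve_right hvR).2 ⟨u, huR, huv.symm⟩ |>.elim
  · exact (hu.resolve_right huR).2 ⟨v, hvR, huv⟩ |>.elim
  · exact htwin huv

theorem IsTwinfreeRooted.ncard_range_neighborSet [Finite V] {F : SimpleGraph V} {R : Set V}
    (hF : F.IsTwinfreeRooted R) :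
    (Set.range F.neighborSet).ncard = (F.vStar R).ncard + R.ncard := by
  rw [range_neighborSet_eq_image_vStar_union, hF.injOn_neighborSet.ncard_image,
    Set.ncard_union_eq (Set.disjoint_left.mpr fun _ hv => hv.1)]

section RelationPreserving

variable {F : SimpleGraph V} {G : SimpleGraph W} {π : B → V} {ψ : B → W}

theorem neighborSet_eq_of_eq (hπ : Function.Surjective π)
    (hψ : ∀ a b, F.Adj (π a) (π b) ↔ G.Adj (ψ a) (ψ b)) {a b : B} (hab : ψ a = ψ b) :
    F.neighborSet (π a) = F.neighborSet (π b) := by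
  ext k
  obtain ⟨c, rfl⟩ := hπ k
  simp only [mem_neighborSet, hψ, hab]

theorem ncard_range_neighborSet_le [Finite W] (hπ : Function.Surjective π)
    (hψ : ∀ a b, F.Adj (π a) (π b) ↔ G.Adj (ψ a) (ψ b)) :
    (Set.range F.neighborSet).ncard ≤ (Set.range ψ).ncard := by
  let N : W → Set V := fun w => if h : ∃ a, ψ a = w then F.neighborSet (π h.choose) else ∅
  have hN : Set.range F.neighborSet ⊆ N '' Set.range ψ := by
    rintro _ ⟨v, rfl⟩
    obtain ⟨a, rfl⟩ := hπ v
    have h : ∃ b, ψ b = ψ a := ⟨a, rfl⟩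
    exact ⟨ψ a, ⟨a, rfl⟩, by simp only [N, dif_pos h, neighborSet_eq_of_eq hπ hψ h.choose_spec]⟩
  exact (Set.ncard_le_ncard hN (Set.toFinite _)).trans (Set.ncard_image_le (Set.toFinite _))

theorem IsTwinfreeRooted.surjective_of_card_le [Finite V] [Finite W] {R : Set V} {k : ℕ}
    (hF : F.IsTwinfreeRooted R) (hπ : Function.Surjective π)
    (hψ : ∀ a b, F.Adj (π a) (π b) ↔ G.Adj (ψ a) (ψ b))
    (hk : k ≤ R.ncard) (hcard : Nat.card W ≤ k + (F.vStar R).ncard) :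
    Function.Surjective ψ ∧ k = R.ncard := by
  have hrange : (F.vStar R).ncard + R.ncard ≤ (Set.range ψ).ncard :=
    hF.ncard_range_neighborSet ▸ ncard_range_neighborSet_le hπ hψ
  have huniv : (Set.range ψ).ncard ≤ Nat.card W := Set.ncard_le_card _
  refine ⟨Set.range_eq_univ.mp ?_, by omega⟩
  exact Set.eq_of_subset_of_ncard_le (Set.subset_univ _) (by rw [Set.ncard_univ]; omega)

end RelationPreserving

theorem neighborSet_comap_eq_iff {G : SimpleGraph W} {π : B → W} (hπ : Function.Surjective π)
    (hG : Function.Injective G.neighborSet) {s t : B} :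
    (G.comap π).neighborSet s = (G.comap π).neighborSet t ↔ π s = π t := by
  refine ⟨fun h => hG ?_, fun h => ?_⟩
  · ext u
    obtain ⟨c, rfl⟩ := hπ u
    exact Set.ext_iff.mp h c
  · ext c
    simp only [mem_neighborSet, comap_adj, h]

theorem ncard_compl_le_vStar_comap [Finite W] {G : SimpleGraph W}
    (hG : Function.Injective G.neighborSet) (X : Set W) :
    Xᶜ.ncard ≤
      ((G.comap (Sum.elim id Subtype.val : W ⊕ X → W)).vStar (Set.range Sum.inr)).ncard := by
  rw [← Set.ncard_image_of_injective _ Sum.inl_injective]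
  refine Set.ncard_le_ncard ?_ (Set.toFinite _)
  rintro _ ⟨u, hu, rfl⟩
  refine ⟨fun ⟨w, hw⟩ => Sum.inr_ne_inl hw, ?_⟩
  rintro ⟨_, ⟨w, rfl⟩, hN⟩
  have huw : u = w := (neighborSet_comap_eq_iff (fun u => ⟨.inl u, rfl⟩) hG).mp hN
  exact hu (huw ▸ w.2)

end SimpleGraph

theorem prod_filter_lt_ite_adj_eq_ite {A W : Type*} [Fintype A] (lt : A → A → Prop)
    (htot : ∀ a b, a ≠ b → lt a b ∨ lt b a) (Gr : SimpleGraph A) (G : SimpleGraph W)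
    (f : A → W) :
    ∏ e ∈ Finset.univ.filter (fun e : A × A => lt e.1 e.2),
      (if Gr.Adj e.1 e.2 then (if G.Adj (f e.1) (f e.2) then (1 : ℝ) else 0)
       else 1 - if G.Adj (f e.1) (f e.2) then 1 else 0)
    = if ∀ a b, Gr.Adj a b ↔ G.Adj (f a) (f b) then 1 else 0 := by
  have hfactor : ∀ e : A × A,
      (if Gr.Adj e.1 e.2 then (if G.Adj (f e.1) (f e.2) then (1 : ℝ) else 0)
       else 1 - if G.Adj (f e.1) (f e.2) then 1 else 0)
      = if (Gr.Adj e.1 e.2 ↔ G.Adj (f e.1) (f e.2)) then 1 else 0 := by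
    intro e
    by_cases h₁ : Gr.Adj e.1 e.2 <;> by_cases h₂ : G.Adj (f e.1) (f e.2) <;> simp [h₁, h₂]
  simp_rw [hfactor, Finset.prod_boole, Finset.mem_filter, Finset.mem_univ, true_and]
  congr 1
  refine propext ⟨fun h a b => ?_, fun h e _ => h e.1 e.2⟩
  rcases eq_or_ne a b with rfl | hab
  · simp
  rcases htot a b hab with hlt | hlt
  · exact h (a, b) hlt
  · rw [Gr.adj_comm, G.adj_comm]
    exact h (b, a) hlt

section StepGraphon

variable {α A VG : Type*} {Om : VG → Set α} {P : α → VG}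

theorem exists_index_of_partition (hOmd : ∀ i j : VG, i ≠ j → Disjoint (Om i) (Om j))
    (hOmu : (⋃ i : VG, Om i) = Set.univ) : ∃ P : α → VG, ∀ ω i, ω ∈ Om i ↔ P ω = i := by
  have hcover : ∀ ω, ∃ i, ω ∈ Om i := fun ω => Set.mem_iUnion.mp (hOmu ▸ Set.mem_univ ω)
  choose P hP using hcover
  refine ⟨P, fun ω i => ⟨fun hi => ?_, fun h => h ▸ hP ω⟩⟩
  by_contra hne
  exact Set.disjoint_left.mp (hOmd _ _ hne) (hP ω) hi

theorem WGz_eq_ite (hP : ∀ ω i, ω ∈ Om i ↔ P ω = i) (G : SimpleGraph VG) (u w : α) :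
    WGz G Om u w = if G.Adj (P u) (P w) then 1 else 0 := by
  simp only [WGz, hP, exists_eq_right_right', exists_eq_right']

theorem hitSet_eq_pair_s16 (hP : ∀ ω i, ω ∈ Om i ↔ P ω = i) (x y : α) :
    hitSet Om x y = {P x, P y} := by
  ext v
  simp only [hitSet, hP, Set.mem_insert_iff, Set.mem_singleton_iff, eq_comm]
  rfl

section RootedDensity

variable [Fintype A] [DecidableEq A] {p q : A} {x y : α}

theorem prod_indicator_asg_eq_ite (hP : ∀ ω i, ω ∈ Om i ↔ P ω = i) (v : A → α) (ψ : A → VG) :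
    ∏ a, (Om (ψ a)).indicator (1 : α → ℝ) (asg p q x y v a)
      = if ψ = P ∘ asg p q x y v then 1 else 0 := by
  simp only [Set.indicator_apply, Pi.one_apply, Fintype.prod_boole, hP, funext_iff,
    Function.comp_apply, eq_comm]

theorem integrand_WGz_eq_sum [Fintype VG] (hP : ∀ ω i, ω ∈ Om i ↔ P ω = i)
    (lt : A → A → Prop) (htot : ∀ a b, a ≠ b → lt a b ∨ lt b a) (Gr : SimpleGraph A)
    (G : SimpleGraph VG) (v : A → α) :
    ∏ e ∈ Finset.univ.filter (fun e : A × A => lt e.1 e.2),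
      (if Gr.Adj e.1 e.2 then WGz G Om (asg p q x y v e.1) (asg p q x y v e.2)
       else 1 - WGz G Om (asg p q x y v e.1) (asg p q x y v e.2))
    = ∑ ψ : A → VG, (if ∀ a b, Gr.Adj a b ↔ G.Adj (ψ a) (ψ b) then 1 else 0) *
        ∏ a, (Om (ψ a)).indicator (1 : α → ℝ) (asg p q x y v a) := by
  have hrel := prod_filter_lt_ite_adj_eq_ite lt htot Gr G (P ∘ asg p q x y v)
  simp only [Function.comp_apply] at hrel
  simp_rw [WGz_eq_ite hP, hrel, prod_indicator_asg_eq_ite hP, mul_ite, mul_one, mul_zero,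
    Finset.sum_ite_eq', Finset.mem_univ, if_true]
  rfl

end RootedDensity

end StepGraphon

section Density

variable {A VG : Type*} [Fintype A] [DecidableEq A] {Om : VG → Set Ω} {P : Ω → VG}
  {p q : A} {x y : Ω}

theorem integrable_prod_indicator_asg (μ : Measure Ω) [IsProbabilityMeasure μ]
    (hOmm : ∀ i, MeasurableSet (Om i)) (ψ : A → VG) :
    Integrable (fun v => ∏ a, (Om (ψ a)).indicator (1 : Ω → ℝ) (asg p q x y v a))
      (Measure.pi fun _ : A => μ) := by
  refine Integrable.fintype_prod
    (f := fun a ω => (Om (ψ a)).indicator (1 : Ω → ℝ) (asg p q x y (fun _ => ω) a)) fun a => ?_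
  have hasg : Measurable fun ω : Ω => asg p q x y (fun _ => ω) a := by
    unfold asg
    split_ifs <;> fun_prop
  refine (integrable_const (1 : ℝ)).mono'
    ((measurable_const.indicator (hOmm _)).comp hasg).aestronglyMeasurable
    (ae_of_all _ fun ω => ?_)
  simpa using norm_indicator_le_norm_self (1 : Ω → ℝ) (asg p q x y (fun _ => ω) a)

theorem integral_prod_indicator_asg (μ : Measure Ω) [IsProbabilityMeasure μ] {z : VG → ℝ}
    (hz0 : ∀ i, 0 ≤ z i) (hOmm : ∀ i, MeasurableSet (Om i))
    (hOmz : ∀ i, μ (Om i) = ENNReal.ofReal (z i)) (hpq : p ≠ q) (ψ : A → VG) :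
    ∫ v, ∏ a, (Om (ψ a)).indicator (1 : Ω → ℝ) (asg p q x y v a) ∂(Measure.pi fun _ : A => μ)
      = (Om (ψ p)).indicator 1 x * (Om (ψ q)).indicator 1 y *
          ∏ a ∈ Finset.univ.filter (fun a : A => a ≠ p ∧ a ≠ q), z (ψ a) := by
  refine (integral_fintype_prod_eq_prod (μ := fun _ : A => μ)
    fun a ω => (Om (ψ a)).indicator (1 : Ω → ℝ) (asg p q x y (fun _ => ω) a)).trans ?_
  have hrest : (Finset.univ.erase p).erase q = Finset.univ.filter (fun a : A => a ≠ p ∧ a ≠ q) := by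
    ext a
    simp [and_comm]
  rw [← Finset.mul_prod_erase _ _ (Finset.mem_univ p),
    ← Finset.mul_prod_erase _ _ (Finset.mem_erase.mpr ⟨hpq.symm, Finset.mem_univ q⟩),
    ← mul_assoc, hrest]
  simp only [asg, ↓reduceIte, integral_const, probReal_univ, smul_eq_mul, one_mul, hpq.symm]
  congr 1
  refine Finset.prod_congr rfl fun a ha => ?_
  obtain ⟨hap, haq⟩ := (Finset.mem_filter.mp ha).2
  simp only [hap, haq, ↓reduceIte, integral_indicator_one (hOmm _), measureReal_def, hOmz,
    ENNReal.toReal_ofReal (hz0 _)]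

theorem rdensity_WGz_eq_sum [Fintype VG] (μ : Measure Ω) [IsProbabilityMeasure μ]
    (G : SimpleGraph VG) {z : VG → ℝ} (hz0 : ∀ i, 0 ≤ z i) (hOmm : ∀ i, MeasurableSet (Om i))
    (hP : ∀ ω i, ω ∈ Om i ↔ P ω = i) (hOmz : ∀ i, μ (Om i) = ENNReal.ofReal (z i))
    (lt : A → A → Prop) (htot : ∀ a b, a ≠ b → lt a b ∨ lt b a) (Gr : SimpleGraph A)
    (hpq : p ≠ q) :
    rdensity lt μ Gr p q (WGz G Om) x y
      = ∑ ψ ∈ Finset.univ.filter (fun ψ : A → VG =>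
          (∀ a b : A, Gr.Adj a b ↔ G.Adj (ψ a) (ψ b)) ∧ x ∈ Om (ψ p) ∧ y ∈ Om (ψ q)),
          ∏ a ∈ Finset.univ.filter (fun a : A => a ≠ p ∧ a ≠ q), z (ψ a) := by
  simp_rw [rdensity, integrand_WGz_eq_sum hP lt htot Gr G]
  rw [integral_finsetSum _ fun ψ _ => (integrable_prod_indicator_asg μ hOmm ψ).const_mul _]
  simp_rw [integral_const_mul, integral_prod_indicator_asg μ hz0 hOmm hOmz hpq,
    Finset.sum_filter]
  refine Finset.sum_congr rfl fun ψ _ => ?_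
  simp only [Set.indicator_apply, Pi.one_apply]
  split_ifs <;> simp_all

end Density

section Blowup

variable {VF VG : Type*} {m : VF → ℕ}

theorem sigma_lex_total [LinearOrder VF] (a b : Σ i, Fin (m i)) (hab : a ≠ b) :
    (a.1 < b.1 ∨ (a.1 = b.1 ∧ (a.2 : ℕ) < (b.2 : ℕ))) ∨
      (b.1 < a.1 ∨ (b.1 = a.1 ∧ (b.2 : ℕ) < (a.2 : ℕ))) := by
  obtain ⟨i, c⟩ := a
  obtain ⟨j, d⟩ := b
  rcases lt_trichotomy i j with h | rfl | h
  · exact Or.inl (Or.inl h)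
  · rcases lt_trichotomy (c : ℕ) d with h | h | h
    · exact Or.inl (Or.inr ⟨rfl, h⟩)
    · exact absurd (congrArg (Sigma.mk i) (Fin.ext h)) hab
    · exact Or.inr (Or.inr ⟨rfl, h⟩)
  · exact Or.inr (Or.inl h)

theorem sigma_ne_mk_zero_iff {r : VF} (hr : m r = 1) (h : 0 < m r) (a : Σ i, Fin (m i)) :
    a ≠ ⟨r, ⟨0, h⟩⟩ ↔ a.1 ≠ r := by
  refine ⟨fun ha har => ha ?_, fun ha h' => ha (congrArg Sigma.fst h')⟩
  obtain ⟨i, c⟩ := a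
  subst har
  have hc : (c : ℕ) < 1 := hr ▸ c.isLt
  exact congrArg (Sigma.mk i) (Fin.ext (Nat.lt_one_iff.mp hc))

theorem prod_blowup_nonroots [Fintype VF] [DecidableEq VF] {M : Type*} [CommMonoid M] {r₁ r₂ : VF}
    (hm₁ : m r₁ = 1) (hm₂ : m r₂ = 1) (h₁ : 0 < m r₁) (h₂ : 0 < m r₂) (f : VF → M) :
    ∏ a ∈ Finset.univ.filter (fun a : Σ i, Fin (m i) => a ≠ ⟨r₁, ⟨0, h₁⟩⟩ ∧ a ≠ ⟨r₂, ⟨0, h₂⟩⟩),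
        f a.1
      = ∏ i ∈ Finset.univ.filter (fun i : VF => i ≠ r₁ ∧ i ≠ r₂), f i ^ m i := by
  have hnonroots : Finset.univ.filter
      (fun a : Σ i, Fin (m i) => a ≠ ⟨r₁, ⟨0, h₁⟩⟩ ∧ a ≠ ⟨r₂, ⟨0, h₂⟩⟩)
      = (Finset.univ.filter (fun i : VF => i ≠ r₁ ∧ i ≠ r₂)).sigma fun _ => Finset.univ := by
    ext a
    simp [sigma_ne_mk_zero_iff hm₁, sigma_ne_mk_zero_iff hm₂]
  rw [hnonroots, Finset.prod_sigma]
  simp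

theorem SimpleGraph.IsTwinfreeRooted.blowup_factors [Finite VF] [Finite VG] {F : SimpleGraph VF}
    {G : SimpleGraph VG} {r₁ r₂ : VF} (hr : r₁ ≠ r₂) (hF : F.IsTwinfreeRooted {r₁, r₂})
    (hG : Function.Injective G.neighborSet) (hm : ∀ i, 0 < m i) {ψ : (Σ i, Fin (m i)) → VG}
    (hψ : ∀ a b, F.Adj a.1 b.1 ↔ G.Adj (ψ a) (ψ b))
    (hcard : Nat.card VG ≤ ({ψ ⟨r₁, ⟨0, hm r₁⟩⟩, ψ ⟨r₂, ⟨0, hm r₂⟩⟩} : Set VG).ncard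
      + (F.vStar {r₁, r₂}).ncard) :
    ψ ⟨r₁, ⟨0, hm r₁⟩⟩ ≠ ψ ⟨r₂, ⟨0, hm r₂⟩⟩ ∧ ∀ a b, a.1 = b.1 → ψ a = ψ b := by
  have hk : ({ψ ⟨r₁, ⟨0, hm r₁⟩⟩, ψ ⟨r₂, ⟨0, hm r₂⟩⟩} : Set VG).ncard
      ≤ ({r₁, r₂} : Set VF).ncard := by
    rw [Set.ncard_pair hr]
    exact (Set.ncard_insert_le _ _).trans (by rw [Set.ncard_singleton])
  obtain ⟨hsurj, hkR⟩ := hF.surjective_of_card_le (fun i => ⟨⟨i, ⟨0, hm i⟩⟩, rfl⟩) hψ hk hcard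
  refine ⟨fun h => ?_, fun a b hab =>
    hG (SimpleGraph.neighborSet_eq_of_eq hsurj (fun a b => (hψ a b).symm) hab)⟩
  rw [h, Set.pair_eq_singleton, Set.ncard_singleton, Set.ncard_pair hr] at hkR
  exact absurd hkR (by decide)

theorem sum_filter_blowup_eq [Fintype VF] [DecidableEq VF] [Fintype VG] (F : SimpleGraph VF)
    (G : SimpleGraph VG) (hm : ∀ i, 0 < m i) {r₁ r₂ : VF} (hm₁ : m r₁ = 1) (hm₂ : m r₂ = 1)
    (Q₁ Q₂ : VG → Prop) (z : VG → ℝ)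
    (hfactor : ∀ ψ : (Σ i, Fin (m i)) → VG, (∀ a b, F.Adj a.1 b.1 ↔ G.Adj (ψ a) (ψ b)) →
      Q₁ (ψ ⟨r₁, ⟨0, hm r₁⟩⟩) → Q₂ (ψ ⟨r₂, ⟨0, hm r₂⟩⟩) → ∀ a b, a.1 = b.1 → ψ a = ψ b) :
    ∑ ψ ∈ Finset.univ.filter (fun ψ : (Σ i, Fin (m i)) → VG =>
        (∀ a b, (SimpleGraph.comap Sigma.fst F).Adj a b ↔ G.Adj (ψ a) (ψ b)) ∧
          Q₁ (ψ ⟨r₁, ⟨0, hm r₁⟩⟩) ∧ Q₂ (ψ ⟨r₂, ⟨0, hm r₂⟩⟩)),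
        ∏ a ∈ Finset.univ.filter
          (fun a : Σ i, Fin (m i) => a ≠ ⟨r₁, ⟨0, hm r₁⟩⟩ ∧ a ≠ ⟨r₂, ⟨0, hm r₂⟩⟩), z (ψ a)
      = ∑ f ∈ Finset.univ.filter (fun f : VF → VG =>
          (∀ u v, F.Adj u v ↔ G.Adj (f u) (f v)) ∧ Q₁ (f r₁) ∧ Q₂ (f r₂)),
        ∏ i ∈ Finset.univ.filter (fun i : VF => i ≠ r₁ ∧ i ≠ r₂), z (f i) ^ m i := by
  refine Finset.sum_nbij' (fun ψ i => ψ ⟨i, ⟨0, hm i⟩⟩) (fun f => f ∘ Sigma.fst)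
    (fun ψ hψ => ?_) (fun f hf => ?_) (fun ψ hψ => ?_) (fun f _ => rfl) (fun ψ hψ => ?_)
  · simp only [Finset.mem_filter, Finset.mem_univ, true_and] at hψ ⊢
    exact ⟨fun u v => hψ.1 ⟨u, ⟨0, hm u⟩⟩ ⟨v, ⟨0, hm v⟩⟩, hψ.2⟩
  · simp only [Finset.mem_filter, Finset.mem_univ, true_and] at hf ⊢
    exact ⟨fun a b => hf.1 _ _, hf.2⟩
  · simp only [Finset.mem_filter, Finset.mem_univ, true_and] at hψ
    funext a
    exact hfactor ψ hψ.1 hψ.2.1 hψ.2.2 _ _ rfl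
  · simp only [Finset.mem_filter, Finset.mem_univ, true_and] at hψ
    refine (Finset.prod_congr rfl fun a _ => ?_).trans
      (prod_blowup_nonroots hm₁ hm₂ (hm r₁) (hm r₂) fun i => z (ψ ⟨i, ⟨0, hm i⟩⟩))
    exact congrArg z (hfactor ψ hψ.1 hψ.2.1 hψ.2.2 _ _ rfl)

end Blowup

section RootedVersion

variable {α VF VG : Type*}

def liftRoots (R : Set VF) (X : Set VG) (f : VF → VG) (v : VF) : VG ⊕ X :=
  if h : v ∈ R ∧ f v ∈ X then .inr ⟨f v, h.2⟩ else .inl (f v)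

variable {R : Set VF} {X : Set VG}

theorem elim_val_liftRoots (f : VF → VG) (v : VF) :
    Sum.elim id Subtype.val (liftRoots R X f v) = f v := by
  unfold liftRoots
  split_ifs <;> rfl

theorem liftRoots_of_mem {f : VF → VG} {v : VF} (hv : v ∈ R) (hfv : f v ∈ X) :
    liftRoots R X f v = .inr ⟨f v, hfv⟩ :=
  dif_pos ⟨hv, hfv⟩

theorem liftRoots_mem_range_inr_iff {f : VF → VG} (hf : ∀ v ∈ R, f v ∈ X) (v : VF) :
    liftRoots R X f v ∈ Set.range Sum.inr ↔ v ∈ R := by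
  by_cases hv : v ∈ R
  · simp [liftRoots_of_mem hv (hf v hv), hv]
  · simp [liftRoots, hv]

theorem liftRoots_elim_val {φ : VF → VG ⊕ X} (hφ : ∀ v, φ v ∈ Set.range Sum.inr ↔ v ∈ R) :
    liftRoots R X (fun v => Sum.elim id Subtype.val (φ v)) = φ := by
  funext v
  rcases hφv : φ v with g | w
  · have hv : v ∉ R := by simp [← hφ, hφv]
    simp [liftRoots, hφv, hv]
  · have hv : v ∈ R := (hφ v).mp ⟨w, hφv.symm⟩
    have hw : Sum.elim id Subtype.val (φ v) ∈ X := by simp [hφv]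
    simp [liftRoots_of_mem (f := fun v => Sum.elim id Subtype.val (φ v)) hv hw, hφv]

theorem rootOrderPreserving_iff {Om : VG → Set α} {P : α → VG} (hP : ∀ ω i, ω ∈ Om i ↔ P ω = i)
    {x y : α} {r₁ r₂ : VF} (hr : r₁ ≠ r₂) {φ : VF → VG ⊕ ↥(hitSet Om x y)}
    {w₁ w₂ : ↥(hitSet Om x y)} (h₁ : φ r₁ = .inr w₁) (h₂ : φ r₂ = .inr w₂) :
    (∀ u v : VF, u ∈ ({r₁, r₂} : Set VF) → v ∈ ({r₁, r₂} : Set VF) →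
        (TLe Om x y (φ u) (φ v) ↔ (u = v ∨ (u = r₁ ∧ v = r₂))))
      ↔ (w₁ : VG) = P x ∧ (w₂ : VG) = P y ∧ P x ≠ P y := by
  have hw₂ : P x = w₂ ∨ P y = w₂ := (w₂.2 : x ∈ Om w₂ ∨ y ∈ Om w₂).imp (hP _ _).mp (hP _ _).mp
  constructor
  · intro h
    have h₁₂ := h r₁ r₂ (by simp) (by simp)
    have h₂₁ := h r₂ r₁ (by simp) (by simp)
    simp only [h₁, h₂, TLe, hP, Subtype.ext_iff, hr, hr.symm, false_and, or_false, and_true,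
      or_true, iff_true, iff_false, not_or] at h₁₂ h₂₁
    grind
  · rintro ⟨hw₁, hw₂, hxy⟩ u v hu hv
    simp only [Set.mem_insert_iff, Set.mem_singleton_iff] at hu hv
    rcases hu with rfl | rfl <;> rcases hv with rfl | rfl <;>
      simp [h₁, h₂, TLe, hP, Subtype.ext_iff, hw₁, hw₂, hxy, hr, hr.symm, Ne.symm hxy]

theorem sum_filter_rootedVersion_eq [Fintype VF] [DecidableEq VF] [Fintype VG]
    {Om : VG → Set α} {P : α → VG} (hP : ∀ ω i, ω ∈ Om i ↔ P ω = i) (F : SimpleGraph VF)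
    (G : SimpleGraph VG) {x y : α} {r₁ r₂ : VF} (hr : r₁ ≠ r₂) (w : (VF → VG) → ℝ)
    (hne : ∀ f : VF → VG, (∀ u v, F.Adj u v ↔ G.Adj (f u) (f v)) →
      x ∈ Om (f r₁) → y ∈ Om (f r₂) → f r₁ ≠ f r₂) :
    ∑ f ∈ Finset.univ.filter (fun f : VF → VG =>
        (∀ u v, F.Adj u v ↔ G.Adj (f u) (f v)) ∧ x ∈ Om (f r₁) ∧ y ∈ Om (f r₂)), w f
      = ∑ φ ∈ Finset.univ.filter (fun φ : VF → (VG ⊕ ↥(hitSet Om x y)) =>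
          (∀ u v : VF, F.Adj u v ↔ (rootedVersion G Om x y).Adj (φ u) (φ v)) ∧
          (∀ v : VF,
            φ v ∈ Set.range (Sum.inr : ↥(hitSet Om x y) → VG ⊕ ↥(hitSet Om x y))
              ↔ v ∈ ({r₁, r₂} : Set VF)) ∧
          (∀ u v : VF, u ∈ ({r₁, r₂} : Set VF) → v ∈ ({r₁, r₂} : Set VF) →
            (TLe Om x y (φ u) (φ v) ↔ (u = v ∨ (u = r₁ ∧ v = r₂))))),
        w (fun i => Sum.elim id Subtype.val (φ i)) := by
  refine Finset.sum_nbij' (liftRoots {r₁, r₂} (hitSet Om x y))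
    (fun φ i => Sum.elim id Subtype.val (φ i)) (fun f hf => ?_) (fun φ hφ => ?_)
    (fun f _ => funext (elim_val_liftRoots f)) (fun φ hφ => ?_)
    (fun f _ => congrArg w (funext (elim_val_liftRoots f)).symm)
  · simp only [Finset.mem_filter, Finset.mem_univ, true_and] at hf ⊢
    obtain ⟨hrel, hx, hy⟩ := hf
    have hroots : ∀ v ∈ ({r₁, r₂} : Set VF), f v ∈ hitSet Om x y := by
      rintro v (rfl | rfl)
      exacts [Or.inl hx, Or.inr hy]
    refine ⟨fun u v => ?_, liftRoots_mem_range_inr_iff hroots, ?_⟩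
    · simp only [rootedVersion, SimpleGraph.comap_adj, elim_val_liftRoots, hrel]
    · rw [rootOrderPreserving_iff hP hr (liftRoots_of_mem (by simp) (hroots r₁ (by simp)))
        (liftRoots_of_mem (by simp) (hroots r₂ (by simp)))]
      have hx' := (hP _ _).mp hx
      have hy' := (hP _ _).mp hy
      exact ⟨hx'.symm, hy'.symm, hx' ▸ hy' ▸ hne f hrel hx hy⟩
  · simp only [Finset.mem_filter, Finset.mem_univ, true_and] at hφ ⊢
    obtain ⟨hrel, hroot, hord⟩ := hφ
    obtain ⟨w₁, h₁⟩ := (hroot r₁).mpr (by simp)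
    obtain ⟨w₂, h₂⟩ := (hroot r₂).mpr (by simp)
    obtain ⟨hw₁, hw₂, -⟩ := (rootOrderPreserving_iff hP hr h₁.symm h₂.symm).mp hord
    refine ⟨hrel, ?_, ?_⟩
    · rw [← h₁, Sum.elim_inr, hP, hw₁]
    · rw [← h₂, Sum.elim_inr, hP, hw₂]
  · simp only [Finset.mem_filter, Finset.mem_univ, true_and] at hφ
    exact liftRoots_elim_val hφ.2.1

end RootedVersion

/-- The blowup `F^R(m)` has vertex set `Σ i, Fin (m i)` with adjacency inherited from `F`; since
`m r₁ = m r₂ = 1`, its ordered pair of roots is `(⟨r₁,0⟩, ⟨r₂,0⟩)`; unordered pairs of its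
vertices are enumerated by the lexicographic strict order.  For a rooted graph `K^S`,
`v*(K^S)` is the number of non-root vertices of `K` having no twin in `S`. -/
theorem stmt16_general {VF VG : Type*} [Fintype VF] [LinearOrder VF] [Fintype VG]
    (μ : Measure Ω) [IsProbabilityMeasure μ]
    (F : SimpleGraph VF) (r₁ r₂ : VF) (hr : r₁ ≠ r₂)
    (htfF : ∀ u v : VF, Xor' (u ∈ ({r₁, r₂} : Set VF)) (v ∈ ({r₁, r₂} : Set VF)) ∨
      (F.neighborSet u = F.neighborSet v → u = v))
    (G : SimpleGraph VG)
    (htfG : ∀ u v : VG, G.neighborSet u = G.neighborSet v → u = v)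
    (z : VG → ℝ) (hz0 : ∀ i, 0 ≤ z i)
    (Om : VG → Set Ω) (hOmm : ∀ i, MeasurableSet (Om i))
    (hOmd : ∀ i j : VG, i ≠ j → Disjoint (Om i) (Om j))
    (hOmu : (⋃ i : VG, Om i) = Set.univ)
    (hOmz : ∀ i, μ (Om i) = ENNReal.ofReal (z i))
    (m : VF → ℕ) (hm : ∀ i, 0 < m i) (hm2 : m r₁ + m r₂ = 2)
    (x y : Ω)
    (hvstar :
      {s : VG ⊕ ↥(hitSet Om x y) |
          s ∉ Set.range (Sum.inr : ↥(hitSet Om x y) → VG ⊕ ↥(hitSet Om x y)) ∧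
          ¬ ∃ t ∈ Set.range (Sum.inr : ↥(hitSet Om x y) → VG ⊕ ↥(hitSet Om x y)),
              (rootedVersion G Om x y).neighborSet s
                = (rootedVersion G Om x y).neighborSet t}.ncard
        ≤ {v : VF | v ∉ ({r₁, r₂} : Set VF) ∧
            ¬ ∃ s ∈ ({r₁, r₂} : Set VF),
                F.neighborSet v = F.neighborSet s}.ncard) :
    rdensity
      (fun a b : Σ i : VF, Fin (m i) => a.1 < b.1 ∨ (a.1 = b.1 ∧ (a.2 : ℕ) < (b.2 : ℕ)))
      μ (SimpleGraph.comap (Sigma.fst) F)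
      ⟨r₁, ⟨0, hm r₁⟩⟩ ⟨r₂, ⟨0, hm r₂⟩⟩ (WGz G Om) x y
    = ∑ φ ∈ Finset.univ.filter (fun φ : VF → (VG ⊕ ↥(hitSet Om x y)) =>
        (∀ u v : VF, F.Adj u v ↔ (rootedVersion G Om x y).Adj (φ u) (φ v)) ∧
        (∀ v : VF,
          φ v ∈ Set.range (Sum.inr : ↥(hitSet Om x y) → VG ⊕ ↥(hitSet Om x y))
            ↔ v ∈ ({r₁, r₂} : Set VF)) ∧
        (∀ u v : VF, u ∈ ({r₁, r₂} : Set VF) → v ∈ ({r₁, r₂} : Set VF) →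
          (TLe Om x y (φ u) (φ v) ↔ (u = v ∨ (u = r₁ ∧ v = r₂))))),
      ∏ i ∈ Finset.univ.filter (fun i : VF => i ≠ r₁ ∧ i ≠ r₂),
        z (Sum.elim id Subtype.val (φ i)) ^ (m i) := by
  obtain ⟨P, hP⟩ := exists_index_of_partition hOmd hOmu
  obtain ⟨hm₁, hm₂⟩ : m r₁ = 1 ∧ m r₂ = 1 := by have := hm r₁; have := hm r₂; omega
  have hcard : Nat.card VG ≤ ({P x, P y} : Set VG).ncard + (F.vStar {r₁, r₂}).ncard := by
    rw [← hitSet_eq_pair_s16 hP, ← Set.ncard_add_ncard_compl (hitSet Om x y)]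
    exact Nat.add_le_add_left ((SimpleGraph.ncard_compl_le_vStar_comap htfG _).trans hvstar) _
  have hfactor : ∀ ψ : (Σ i, Fin (m i)) → VG, (∀ a b, F.Adj a.1 b.1 ↔ G.Adj (ψ a) (ψ b)) →
      x ∈ Om (ψ ⟨r₁, ⟨0, hm r₁⟩⟩) → y ∈ Om (ψ ⟨r₂, ⟨0, hm r₂⟩⟩) →
      ψ ⟨r₁, ⟨0, hm r₁⟩⟩ ≠ ψ ⟨r₂, ⟨0, hm r₂⟩⟩ ∧ ∀ a b, a.1 = b.1 → ψ a = ψ b := by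
    intro ψ hψ hx hy
    rw [hP] at hx hy
    exact SimpleGraph.IsTwinfreeRooted.blowup_factors hr htfF htfG hm hψ (hx ▸ hy ▸ hcard)
  rw [rdensity_WGz_eq_sum μ G hz0 hOmm hP hOmz _ sigma_lex_total _
    fun h => hr (congrArg Sigma.fst h)]
  refine (sum_filter_blowup_eq F G hm hm₁ hm₂ (fun g => x ∈ Om g) (fun g => y ∈ Om g) z
    fun ψ hψ hx hy => (hfactor ψ hψ hx hy).2).trans ?_
  -- `convert` only reconciles the `Decidable` instances of the filter, elaborated differently here
  convert sum_filter_rootedVersion_eq hP F G hr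
    (fun f => ∏ i ∈ Finset.univ.filter (fun i : VF => i ≠ r₁ ∧ i ≠ r₂), z (f i) ^ m i)
    (fun f hf hx hy => (hfactor (f ∘ Sigma.fst) (fun a b => hf _ _) hx hy).1)

/-- Let `F^R` be a twinfree rooted graph whose root set `R = {r₁, r₂}` has
exactly two elements (ordered `r₁` then `r₂` by the linear order of `VF`), let `G` be a
twinfree graph, `z` a probability vector on `V(G)` and `W_G^z` a `z`-scaled graphon
representation of `G` with partition `(Ω_i)`.  Let `m` have positive entries with
`m r₁ + m r₂ = 2`, let `(x,y) ∈ Ω²` and let `H^T` be the `(x,y)`-rooted version of `G`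
(whose set of roots is `T = Set.range Sum.inr`, ordered so that the duplicate of the part
containing `x` comes first).  If `v*(F^R) ≥ v*(H^T)` and `|R| ≥ |T|`, then
`T_{F^R(m)} W_G^z (x,y) = ∑_φ ∏_{i ∈ V(F)∖R} z_{φ(i)}^{m_i}`, the sum being over all
root-order-preserving root-respecting relation-preserving functions `φ : V(F) → V(H)` from
`F^R` to `H^T`.

The blowup `F^R(m)` has vertex set `Σ i, Fin (m i)` with adjacency inherited from `F`; since
`m r₁ = m r₂ = 1`, its ordered pair of roots is `(⟨r₁,0⟩, ⟨r₂,0⟩)`; unordered pairs of its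
vertices are enumerated by the lexicographic strict order.  For a rooted graph `K^S`,
`v*(K^S)` is the number of non-root vertices of `K` having no twin in `S`. -/
theorem stmt16 {VF VG : Type*} [Fintype VF] [LinearOrder VF] [Fintype VG] [DecidableEq VG]
    (μ : Measure Ω) [IsProbabilityMeasure μ] [NullSingletonClass μ]
    (F : SimpleGraph VF) (r₁ r₂ : VF) (hr : r₁ ≠ r₂)
    (htfF : ∀ u v : VF, Xor' (u ∈ ({r₁, r₂} : Set VF)) (v ∈ ({r₁, r₂} : Set VF)) ∨
      (F.neighborSet u = F.neighborSet v → u = v))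
    (G : SimpleGraph VG)
    (htfG : ∀ u v : VG, G.neighborSet u = G.neighborSet v → u = v)
    (z : VG → ℝ) (hz0 : ∀ i, 0 ≤ z i) (hz1 : ∀ i, z i ≤ 1) (hzs : ∑ i : VG, z i = 1)
    (Om : VG → Set Ω) (hOmm : ∀ i, MeasurableSet (Om i))
    (hOmd : ∀ i j : VG, i ≠ j → Disjoint (Om i) (Om j))
    (hOmu : (⋃ i : VG, Om i) = Set.univ)
    (hOmz : ∀ i, μ (Om i) = ENNReal.ofReal (z i))
    (m : VF → ℕ) (hm : ∀ i, 0 < m i) (hm2 : m r₁ + m r₂ = 2)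
    (x y : Ω)
    (hvstar :
      {s : VG ⊕ ↥(hitSet Om x y) |
          s ∉ Set.range (Sum.inr : ↥(hitSet Om x y) → VG ⊕ ↥(hitSet Om x y)) ∧
          ¬ ∃ t ∈ Set.range (Sum.inr : ↥(hitSet Om x y) → VG ⊕ ↥(hitSet Om x y)),
              (rootedVersion G Om x y).neighborSet s
                = (rootedVersion G Om x y).neighborSet t}.ncard
        ≤ {v : VF | v ∉ ({r₁, r₂} : Set VF) ∧
            ¬ ∃ s ∈ ({r₁, r₂} : Set VF),
                F.neighborSet v = F.neighborSet s}.ncard)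
    (hT : (Set.range (Sum.inr : ↥(hitSet Om x y) → VG ⊕ ↥(hitSet Om x y))).ncard ≤ 2) :
    rdensity
      (fun a b : Σ i : VF, Fin (m i) => a.1 < b.1 ∨ (a.1 = b.1 ∧ (a.2 : ℕ) < (b.2 : ℕ)))
      μ (SimpleGraph.comap (Sigma.fst) F)
      ⟨r₁, ⟨0, hm r₁⟩⟩ ⟨r₂, ⟨0, hm r₂⟩⟩ (WGz G Om) x y
    = ∑ φ ∈ Finset.univ.filter (fun φ : VF → (VG ⊕ ↥(hitSet Om x y)) =>
        (∀ u v : VF, F.Adj u v ↔ (rootedVersion G Om x y).Adj (φ u) (φ v)) ∧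
        (∀ v : VF,
          φ v ∈ Set.range (Sum.inr : ↥(hitSet Om x y) → VG ⊕ ↥(hitSet Om x y))
            ↔ v ∈ ({r₁, r₂} : Set VF)) ∧
        (∀ u v : VF, u ∈ ({r₁, r₂} : Set VF) → v ∈ ({r₁, r₂} : Set VF) →
          (TLe Om x y (φ u) (φ v) ↔ (u = v ∨ (u = r₁ ∧ v = r₂))))),
      ∏ i ∈ Finset.univ.filter (fun i : VF => i ≠ r₁ ∧ i ≠ r₂),
        z (Sum.elim id Subtype.val (φ i)) ^ (m i) :=
  stmt16_general μ F r₁ r₂ hr htfF G htfG z hz0 Om hOmm hOmd hOmu hOmz m hm hm2 x y hvstar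

end
end

section
/- Let R and R' be rules of order 2. If a_{J,R} = a_{J,R'} for every isomorphism class J ∈ J_2 of rooted graphs, then R = R'. -/
open scoped Classical

lemma sg2_cases (H : SG 2) : H = ⊥ ∨ H = ⊤ := by
  by_cases hadj : H.Adj 0 1
  · right
    ext a b
    simp only [SimpleGraph.top_adj]
    constructor
    · exact H.ne_of_adj
    · intro hab
      fin_cases a <;> fin_cases b <;> simp_all <;> exact hadj.symm
  · left
    ext a b
    simp only [SimpleGraph.bot_adj, iff_false]
    intro hab
    have hne := H.ne_of_adj hab
    fin_cases a <;> fin_cases b <;> simp_all <;> exact hadj hab.symm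

lemma bot_ne_top_sg2 : (⊥ : SG 2) ≠ ⊤ := by
  intro hbt
  have h1 : ¬ (⊥ : SG 2).Adj 0 1 := by simp
  rw [hbt] at h1
  exact h1 (by simp)

lemma univ_sg2 : (Finset.univ : Finset (SG 2)) = {⊥, ⊤} := by
  ext H
  simp only [Finset.mem_univ, true_iff, Finset.mem_insert, Finset.mem_singleton]
  exact sg2_cases H

lemma sum_sg2 (f : SG 2 → ℝ) : ∑ H : SG 2, f H = f ⊥ + f ⊤ := by
  rw [univ_sg2, Finset.sum_pair bot_ne_top_sg2]

lemma eInd_bot {k : ℕ} (a b : Fin k) : eInd a b (⊥ : SG k) = 0 := by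
  simp [eInd]

lemma eInd_top {k : ℕ} {a b : Fin k} (hab : a ≠ b) : eInd a b (⊤ : SG k) = 1 := by
  simp [eInd, hab]

lemma permGraph_fix (σ : Equiv.Perm (Fin 2)) (F : SG 2) : permGraph σ F = F := by
  rcases sg2_cases F with rfl | rfl
  · ext a b; simp [permGraph]
  · ext a b
    simp only [permGraph, SimpleGraph.comap_adj, SimpleGraph.top_adj]
    exact (Equiv.apply_eq_iff_eq σ.symm).ne

lemma term_eval (R : SG 2 → SG 2 → ℝ) (F : SG 2) {a b : Fin 2} (hab : a ≠ b) :
    (∑ H : SG 2, R F H * eInd a b H) - eInd a b F = R F ⊤ - eInd a b F := by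
  rw [sum_sg2]
  simp [eInd_bot, eInd_top hab]

lemma eInd_of_ne {a b c d : Fin 2} (hab : a ≠ b) (hcd : c ≠ d) (F : SG 2) :
    eInd a b F = eInd c d F := by
  rcases sg2_cases F with rfl | rfl
  · simp [eInd_bot]
  · simp [eInd_top hab, eInd_top hcd]

lemma aCoeff_eval (R : SG 2 → SG 2 → ℝ) (F : SG 2) :
    aCoeff R (rgOrbit F 0 1) = (rgOrbit F 0 1).card * (R F ⊤ - eInd 0 1 F) := by
  rw [aCoeff, Finset.sum_congr rfl, Finset.sum_const, nsmul_eq_mul]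
  intro p hp
  simp only [rgOrbit, Finset.mem_filter] at hp
  obtain ⟨-, σ, h1, h2, h3⟩ := hp
  have hne : p.2.1 ≠ p.2.2 := by
    rw [h2, h3]; exact fun hc => (by decide : (0:Fin 2) ≠ 1) (σ.injective hc)
  rw [h1, permGraph_fix, term_eval R F hne, eInd_of_ne hne (show (0:Fin 2) ≠ 1 by decide)]

/-- Let `R` and `R'` be rules of order `2`.  If `a_{J,R} = a_{J,R'}` for
every isomorphism class `J ∈ J_2` of rooted graphs (i.e. every orbit `Orb(F^{a,b})` with
`a ≠ b`), then `R = R'`. -/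
theorem stmt17 (R R' : SG 2 → SG 2 → ℝ) (hR : IsRule R) (hR' : IsRule R')
    (h : ∀ (F : SG 2) (a b : Fin 2), a ≠ b →
      aCoeff R (rgOrbit F a b) = aCoeff R' (rgOrbit F a b)) :
    R = R' := by
  have htop : ∀ F : SG 2, R F ⊤ = R' F ⊤ := by
    intro F
    have hh := h F 0 1 (by decide)
    rw [aCoeff_eval, aCoeff_eval] at hh
    have hcard : (0:ℝ) < (rgOrbit F 0 1).card := by
      have hmem : (F, 0, 1) ∈ rgOrbit F 0 1 := by
        simp only [rgOrbit, Finset.mem_filter, Finset.mem_univ, true_and]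
        exact ⟨1, by simp [permGraph_fix]⟩
      exact_mod_cast Finset.card_pos.mpr ⟨_, hmem⟩
    have := mul_left_cancel₀ (ne_of_gt hcard) hh
    linarith
  have hbot : ∀ F : SG 2, R F ⊥ = R' F ⊥ := by
    intro F
    have h1 := hR.2 F
    have h2 := hR'.2 F
    rw [sum_sg2] at h1 h2
    have := htop F
    linarith
  funext F H
  rcases sg2_cases H with rfl | rfl
  · exact hbot F
  · exact htop F
end
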